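/- In the category of representations of the quiver Q1 there exist short exact sequences: 0 → E_2^{m−1} → E_1^m → E_1^0 ⊕ E_1^0 → 0 for every m ≥ 1; 0 → E_3^m → E_2^m → M → 0 for every m ≥ 0; 0 → E_3^{m−1} → E_4^m → E_4^0 ⊕ E_4^0 → 0 for every m ≥ 1; and 0 → M → E_4^m → E_1^m → 0 for every m ≥ 0. -/

import Mathlib

noncomputable section

open Module

universe u

/-- A representation of the quiver `Q1` (vertices 1, 2, 3; arrows 1→3, 1→2, 2→3)
over the field `k`, with finite-dimensional vector spaces at the vertices. -/
structure RepQ1 (k : Type u) [Field k] where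
  V1 : Type u
  V2 : Type u
  V3 : Type u
  [acg1 : AddCommGroup V1]
  [acg2 : AddCommGroup V2]
  [acg3 : AddCommGroup V3]
  [mod1 : Module k V1]
  [mod2 : Module k V2]
  [mod3 : Module k V3]
  [fd1 : FiniteDimensional k V1]
  [fd2 : FiniteDimensional k V2]
  [fd3 : FiniteDimensional k V3]
  r13 : V1 →ₗ[k] V3
  r12 : V1 →ₗ[k] V2
  r23 : V2 →ₗ[k] V3

attribute [instance] RepQ1.acg1 RepQ1.acg2 RepQ1.acg3 RepQ1.mod1 RepQ1.mod2 RepQ1.mod3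
  RepQ1.fd1 RepQ1.fd2 RepQ1.fd3

namespace RepQ1

variable {k : Type u} [Field k]

/-- The space of morphisms of representations `ρ → ρ'`:
triples `(f₁, f₂, f₃)` of linear maps commuting with the structure maps. -/
def homSpace (ρ ρ' : RepQ1 k) :
    Submodule k ((ρ.V1 →ₗ[k] ρ'.V1) × (ρ.V2 →ₗ[k] ρ'.V2) × (ρ.V3 →ₗ[k] ρ'.V3)) where
  carrier := { f | f.2.2 ∘ₗ ρ.r13 = ρ'.r13 ∘ₗ f.1 ∧
                   f.2.1 ∘ₗ ρ.r12 = ρ'.r12 ∘ₗ f.1 ∧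
                   f.2.2 ∘ₗ ρ.r23 = ρ'.r23 ∘ₗ f.2.1 }
  add_mem' := by
    rintro f g ⟨h1, h2, h3⟩ ⟨h1', h2', h3'⟩
    refine ⟨?_, ?_, ?_⟩ <;>
      simp only [Prod.fst_add, Prod.snd_add, LinearMap.add_comp, LinearMap.comp_add,
        h1, h2, h3, h1', h2', h3']
  zero_mem' := by
    refine ⟨?_, ?_, ?_⟩ <;> simp
  smul_mem' := by
    rintro c f ⟨h1, h2, h3⟩
    refine ⟨?_, ?_, ?_⟩ <;>
      simp only [Prod.smul_fst, Prod.smul_snd, LinearMap.smul_comp, LinearMap.comp_smul,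
        h1, h2, h3]

/-- `hom ρ ρ'` is the `k`-dimension of the space of morphisms of representations `ρ → ρ'`. -/
def hom (ρ ρ' : RepQ1 k) : ℕ := finrank k (homSpace ρ ρ')

/-- The linear map `Φ` whose cokernel computes `Ext¹(ρ, ρ')`. -/
def phi (ρ ρ' : RepQ1 k) :
    ((ρ.V1 →ₗ[k] ρ'.V1) × (ρ.V2 →ₗ[k] ρ'.V2) × (ρ.V3 →ₗ[k] ρ'.V3)) →ₗ[k]
      ((ρ.V1 →ₗ[k] ρ'.V3) × (ρ.V1 →ₗ[k] ρ'.V2) × (ρ.V2 →ₗ[k] ρ'.V3)) where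
  toFun g := (g.2.2 ∘ₗ ρ.r13 - ρ'.r13 ∘ₗ g.1,
              g.2.1 ∘ₗ ρ.r12 - ρ'.r12 ∘ₗ g.1,
              g.2.2 ∘ₗ ρ.r23 - ρ'.r23 ∘ₗ g.2.1)
  map_add' g h := by
    refine Prod.ext ?_ (Prod.ext ?_ ?_) <;>
      · simp only [Prod.fst_add, Prod.snd_add, LinearMap.add_comp, LinearMap.comp_add]
        abel
  map_smul' c g := by
    refine Prod.ext ?_ (Prod.ext ?_ ?_) <;>
      simp [LinearMap.smul_comp, LinearMap.comp_smul, smul_sub]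

/-- `ext1 ρ ρ'` is the `k`-dimension of the cokernel of `Φ`; it equals
`dim Ext¹(ρ, ρ')` in the abelian category of representations of `Q1`. -/
def ext1 (ρ ρ' : RepQ1 k) : ℕ :=
  finrank k (((ρ.V1 →ₗ[k] ρ'.V3) × (ρ.V1 →ₗ[k] ρ'.V2) × (ρ.V2 →ₗ[k] ρ'.V3)) ⧸
    LinearMap.range (phi ρ ρ'))

/-- A representation is exceptional if `hom ρ ρ = 1` and `ext1 ρ ρ = 0`. -/
def IsExceptional (ρ : RepQ1 k) : Prop := hom ρ ρ = 1 ∧ ext1 ρ ρ = 0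

/-- Isomorphism of representations of `Q1`. -/
def Iso (ρ ρ' : RepQ1 k) : Prop :=
  ∃ (e1 : ρ.V1 ≃ₗ[k] ρ'.V1) (e2 : ρ.V2 ≃ₗ[k] ρ'.V2) (e3 : ρ.V3 ≃ₗ[k] ρ'.V3),
    e3.toLinearMap ∘ₗ ρ.r13 = ρ'.r13 ∘ₗ e1.toLinearMap ∧
    e2.toLinearMap ∘ₗ ρ.r12 = ρ'.r12 ∘ₗ e1.toLinearMap ∧
    e3.toLinearMap ∘ₗ ρ.r23 = ρ'.r23 ∘ₗ e2.toLinearMap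

end RepQ1

variable (k : Type u) [Field k]

/-- `π₊^m : k^{m+1} → k^m`, `(a₁,…,a_{m+1}) ↦ (a₁,…,a_m)`. -/
def piPlus (m : ℕ) : (Fin (m + 1) → k) →ₗ[k] (Fin m → k) :=
  LinearMap.funLeft k k Fin.castSucc

/-- `π₋^m : k^{m+1} → k^m`, `(a₁,…,a_{m+1}) ↦ (a₂,…,a_{m+1})`. -/
def piMinus (m : ℕ) : (Fin (m + 1) → k) →ₗ[k] (Fin m → k) :=
  LinearMap.funLeft k k Fin.succ

/-- `j₊^m : k^m → k^{m+1}`, `(a₁,…,a_m) ↦ (a₁,…,a_m,0)`. -/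
def jPlus (m : ℕ) : (Fin m → k) →ₗ[k] (Fin (m + 1) → k) where
  toFun a := Fin.snoc a 0
  map_add' a b := by
    ext i
    induction i using Fin.lastCases <;> simp
  map_smul' c a := by
    ext i
    induction i using Fin.lastCases <;> simp

/-- `j₋^m : k^m → k^{m+1}`, `(a₁,…,a_m) ↦ (0,a₁,…,a_m)`. -/
def jMinus (m : ℕ) : (Fin m → k) →ₗ[k] (Fin (m + 1) → k) where
  toFun a := Fin.cons 0 a
  map_add' a b := by
    ext i
    induction i using Fin.cases <;> simp
  map_smul' c a := by
    ext i
    induction i using Fin.cases <;> simp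

/-- The representation `E₁^m = (k^{m+1}, k^m, k^m)` with `ρ₁₃ = π₊^m`, `ρ₁₂ = π₋^m`, `ρ₂₃ = id`. -/
def E1 (m : ℕ) : RepQ1 k where
  V1 := Fin (m + 1) → k
  V2 := Fin m → k
  V3 := Fin m → k
  r13 := piPlus k m
  r12 := piMinus k m
  r23 := LinearMap.id

/-- The representation `E₂^m = (k^m, k^{m+1}, k^{m+1})` with `ρ₁₃ = j₊^m`, `ρ₁₂ = j₋^m`, `ρ₂₃ = id`. -/
def E2 (m : ℕ) : RepQ1 k where
  V1 := Fin m → k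
  V2 := Fin (m + 1) → k
  V3 := Fin (m + 1) → k
  r13 := jPlus k m
  r12 := jMinus k m
  r23 := LinearMap.id

/-- The representation `E₃^m = (k^m, k^m, k^{m+1})` with `ρ₁₃ = j₊^m`, `ρ₁₂ = id`, `ρ₂₃ = j₋^m`. -/
def E3 (m : ℕ) : RepQ1 k where
  V1 := Fin m → k
  V2 := Fin m → k
  V3 := Fin (m + 1) → k
  r13 := jPlus k m
  r12 := LinearMap.id
  r23 := jMinus k m

/-- The representation `E₄^m = (k^{m+1}, k^{m+1}, k^m)` with `ρ₁₃ = π₊^m`, `ρ₁₂ = id`, `ρ₂₃ = π₋^m`. -/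
def E4 (m : ℕ) : RepQ1 k where
  V1 := Fin (m + 1) → k
  V2 := Fin (m + 1) → k
  V3 := Fin m → k
  r13 := piPlus k m
  r12 := LinearMap.id
  r23 := piMinus k m

/-- The representation `M = (0, k, 0)` with zero structure maps. -/
def Mrep : RepQ1 k where
  V1 := Fin 0 → k
  V2 := Fin 1 → k
  V3 := Fin 0 → k
  r13 := 0
  r12 := 0
  r23 := 0

/-- The representation `M' = (k, 0, k)` with `ρ₁₃ = id` and the other structure maps zero. -/
def Mprep : RepQ1 k where
  V1 := Fin 1 → k
  V2 := Fin 0 → k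
  V3 := Fin 1 → k
  r13 := LinearMap.id
  r12 := 0
  r23 := 0

namespace RepQ1

variable {k : Type u} [Field k]

/-- An exceptional pair `(X, Y)`: both `X` and `Y` are exceptional and
`hom (Y, X) = 0` and `ext1 (Y, X) = 0`. -/
def IsExceptionalPair (X Y : RepQ1 k) : Prop :=
  X.IsExceptional ∧ Y.IsExceptional ∧ hom Y X = 0 ∧ ext1 Y X = 0

/-- An exceptional triple `(A, B, C)`: `(A,B)`, `(B,C)` and `(A,C)` are exceptional pairs. -/
def IsExceptionalTriple (A B C : RepQ1 k) : Prop :=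
  IsExceptionalPair A B ∧ IsExceptionalPair B C ∧ IsExceptionalPair A C

/-- A morphism of representations of `Q1`. -/
structure Homo (ρ ρ' : RepQ1 k) where
  f1 : ρ.V1 →ₗ[k] ρ'.V1
  f2 : ρ.V2 →ₗ[k] ρ'.V2
  f3 : ρ.V3 →ₗ[k] ρ'.V3
  comm13 : f3 ∘ₗ ρ.r13 = ρ'.r13 ∘ₗ f1
  comm12 : f2 ∘ₗ ρ.r12 = ρ'.r12 ∘ₗ f1
  comm23 : f3 ∘ₗ ρ.r23 = ρ'.r23 ∘ₗ f2

/-- `0 → A → C → B → 0` is a short exact sequence of representations of `Q1`: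
at each vertex the induced sequence of vector spaces is short exact. -/
def IsSES {A C B : RepQ1 k} (f : Homo A C) (g : Homo C B) : Prop :=
  Function.Injective f.f1 ∧ Function.Injective f.f2 ∧ Function.Injective f.f3 ∧
  Function.Surjective g.f1 ∧ Function.Surjective g.f2 ∧ Function.Surjective g.f3 ∧
  LinearMap.range f.f1 = LinearMap.ker g.f1 ∧
  LinearMap.range f.f2 = LinearMap.ker g.f2 ∧
  LinearMap.range f.f3 = LinearMap.ker g.f3

/-- A representation is zero when all its vector spaces are zero. -/
def IsZeroRep (ρ : RepQ1 k) : Prop :=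
  Subsingleton ρ.V1 ∧ Subsingleton ρ.V2 ∧ Subsingleton ρ.V3

end RepQ1

/-- The (vertexwise) direct sum of two representations of `Q1`. -/
def RepQ1.dsum {k : Type u} [Field k] (ρ σ : RepQ1 k) : RepQ1 k where
  V1 := ρ.V1 × σ.V1
  V2 := ρ.V2 × σ.V2
  V3 := ρ.V3 × σ.V3
  r13 := ρ.r13.prodMap σ.r13
  r12 := ρ.r12.prodMap σ.r12
  r23 := ρ.r23.prodMap σ.r23

/-! Each sequence is written down explicitly; at every vertex it is an isomorphism next to a zero
space or one of the split sequences `k^m → k^{m+1} → k` (prepend a zero; first coordinate),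
`k → k^{m+1} → k^m` (first basis vector; drop the first coordinate) and `k^n → k^{n+2} → k × k`
(pad with a zero at both ends; the two end coordinates). In `E₂^{m-1} → E₁^m` and
`E₃^{m-1} → E₄^m` the padding is precomposed with the reversal of `k^{m-1}`, and the targets of
`j₊, j₋` are mapped by the reversal of `k^m`: reversal turns appending a zero into prepending one,
so `j₊` and `j₋` become `π₊` and `π₋` of the padded vector. -/

open Function

section ShortExact

variable {R M M' N P : Type*} [Ring R] [AddCommGroup M] [AddCommGroup M'] [AddCommGroup N]
  [AddCommGroup P] [Module R M] [Module R M'] [Module R N] [Module R P]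

def LinearMap.IsShortExact (f : M →ₗ[R] N) (g : N →ₗ[R] P) : Prop :=
  Injective f ∧ Exact f g ∧ Surjective g

namespace LinearMap

lemma isShortExact_zero_right [Subsingleton P] {f : M →ₗ[R] N} (hf : Bijective f) :
    IsShortExact f (0 : N →ₗ[R] P) :=
  ⟨hf.1, (exact_zero_iff_surjective P f).2 hf.2, fun _ => ⟨0, Subsingleton.elim _ _⟩⟩

lemma isShortExact_zero_left [Subsingleton M] {g : N →ₗ[R] P} (hg : Bijective g) :
    IsShortExact (0 : M →ₗ[R] N) g :=
  ⟨injective_of_subsingleton _, (exact_zero_iff_injective M g).2 hg.1, hg.2⟩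

lemma IsShortExact.comp_bijective {f : M →ₗ[R] N} {g : N →ₗ[R] P} (h : IsShortExact f g)
    {e : M' →ₗ[R] M} (he : Bijective e) : IsShortExact (f ∘ₗ e) g :=
  ⟨h.1.comp he.1, he.2.comp_exact_iff_exact.2 h.2.1, h.2.2⟩

end LinearMap

end ShortExact

section Coordinates

variable {k}

@[simp] lemma piPlus_apply {m : ℕ} (y : Fin (m + 1) → k) (i : Fin m) :
    piPlus k m y i = y i.castSucc := rfl

@[simp] lemma piMinus_apply {m : ℕ} (y : Fin (m + 1) → k) (i : Fin m) :
    piMinus k m y i = y i.succ := rfl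

@[simp] lemma jPlus_apply {m : ℕ} (a : Fin m → k) : jPlus k m a = Fin.snoc a 0 := rfl

@[simp] lemma jMinus_apply {m : ℕ} (a : Fin m → k) : jMinus k m a = Fin.cons 0 a := rfl

lemma jPlus_injective (m : ℕ) : Injective (jPlus k m) :=
  Fin.snoc_left_injective (α := fun _ => k) 0

lemma jMinus_injective (m : ℕ) : Injective (jMinus k m) :=
  Fin.cons_right_injective (α := fun _ => k) 0

lemma piMinus_surjective (m : ℕ) : Surjective (piMinus k m) :=
  fun a => ⟨Fin.cons 0 a, funext fun _ => rfl⟩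

lemma mem_range_jPlus_iff {m : ℕ} {y : Fin (m + 1) → k} :
    y ∈ LinearMap.range (jPlus k m) ↔ y (Fin.last m) = 0 := by
  refine ⟨?_, fun hy => ⟨Fin.init y, ?_⟩⟩
  · rintro ⟨a, rfl⟩
    simp
  · rw [jPlus_apply, ← hy, Fin.snoc_init_self]

lemma mem_range_jMinus_iff {m : ℕ} {y : Fin (m + 1) → k} :
    y ∈ LinearMap.range (jMinus k m) ↔ y 0 = 0 := by
  refine ⟨?_, fun hy => ⟨Fin.tail y, ?_⟩⟩
  · rintro ⟨a, rfl⟩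
    simp
  · rw [jMinus_apply, ← hy, Fin.cons_self_tail]

variable (k) in
def revL (n : ℕ) : (Fin n → k) →ₗ[k] (Fin n → k) := LinearMap.funLeft k k Fin.rev

@[simp] lemma revL_apply {n : ℕ} (a : Fin n → k) (i : Fin n) : revL k n a i = a i.rev := rfl

lemma revL_bijective (n : ℕ) : Bijective (revL k n) :=
  Involutive.bijective fun a => funext fun i => by simp

variable (k) in
def midL (n : ℕ) : (Fin n → k) →ₗ[k] (Fin (n + 2) → k) := jMinus k (n + 1) ∘ₗ jPlus k n

@[simp] lemma midL_apply {n : ℕ} (a : Fin n → k) : midL k n a = Fin.cons 0 (Fin.snoc a 0) := rfl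

lemma revL_comp_jPlus (n : ℕ) :
    revL k (n + 1) ∘ₗ jPlus k n = piPlus k (n + 1) ∘ₗ midL k n ∘ₗ revL k n := by
  refine LinearMap.ext fun a => funext fun i => ?_
  induction i using Fin.cases with
  | zero => simp
  | succ j => simp [Fin.rev_succ]

lemma revL_comp_jMinus (n : ℕ) :
    revL k (n + 1) ∘ₗ jMinus k n = piMinus k (n + 1) ∘ₗ midL k n ∘ₗ revL k n := by
  refine LinearMap.ext fun a => funext fun i => ?_
  induction i using Fin.lastCases with
  | last => simp
  | cast j => simp [Fin.rev_castSucc]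

variable (k) in
def coordL {n : ℕ} (i : Fin n) : (Fin n → k) →ₗ[k] (Fin 1 → k) :=
  LinearMap.pi fun _ => LinearMap.proj i

lemma coordL_eq_zero_iff {n : ℕ} {i : Fin n} {y : Fin n → k} : coordL k i y = 0 ↔ y i = 0 :=
  ⟨fun h => congrFun h 0, fun h => funext fun _ => h⟩

variable (k) in
def endsL (n : ℕ) : (Fin (n + 2) → k) →ₗ[k] (Fin 1 → k) × (Fin 1 → k) :=
  (coordL k 0).prod (coordL k (Fin.last (n + 1)))

variable (k) in
def singleL (m : ℕ) : (Fin 1 → k) →ₗ[k] (Fin (m + 1) → k) :=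
  LinearMap.single k (fun _ => k) 0 ∘ₗ LinearMap.proj 0

@[simp] lemma singleL_apply {m : ℕ} (c : Fin 1 → k) : singleL k m c = Fin.cons (c 0) 0 := by
  ext i
  induction i using Fin.cases <;> simp [singleL]

lemma isShortExact_jMinus_coordL (m : ℕ) : (jMinus k m).IsShortExact (coordL k 0) := by
  refine ⟨jMinus_injective m, fun y => coordL_eq_zero_iff.trans mem_range_jMinus_iff.symm,
    fun c => ⟨Fin.cons (c 0) 0, funext fun j => ?_⟩⟩
  rw [Fin.fin_one_eq_zero j]
  rfl

lemma endsL_eq_zero_iff {n : ℕ} {y : Fin (n + 2) → k} :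
    endsL k n y = 0 ↔ y 0 = 0 ∧ y (Fin.last (n + 1)) = 0 :=
  Prod.ext_iff.trans (and_congr coordL_eq_zero_iff coordL_eq_zero_iff)

lemma isShortExact_midL_endsL (n : ℕ) : (midL k n).IsShortExact (endsL k n) := by
  refine ⟨(jMinus_injective _).comp (jPlus_injective n), fun y => endsL_eq_zero_iff.trans ?_,
    fun c => ⟨Fin.cons (c.1 0) (Fin.snoc 0 (c.2 0)),
      Prod.ext (funext fun j => ?_) (funext fun j => ?_)⟩⟩
  · constructor
    · rintro ⟨h0, hlast⟩
      obtain ⟨z, rfl⟩ := mem_range_jMinus_iff.2 h0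
      obtain ⟨a, rfl⟩ := mem_range_jPlus_iff.2 (by simpa [← Fin.succ_last] using hlast)
      exact ⟨a, rfl⟩
    · rintro ⟨a, rfl⟩
      simp [← Fin.succ_last]
  all_goals rw [Fin.fin_one_eq_zero j]; simp [endsL, coordL, ← Fin.succ_last]

lemma isShortExact_singleL_piMinus (m : ℕ) : (singleL k m).IsShortExact (piMinus k m) := by
  refine ⟨fun c d h => funext fun j => ?_, fun y => ⟨fun hy => ⟨fun _ => y 0, ?_⟩, ?_⟩,
    piMinus_surjective m⟩
  · rw [Fin.fin_one_eq_zero j]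
    simpa using congrFun h 0
  · rw [singleL_apply]
    conv_rhs => rw [← Fin.cons_self_tail y]
    exact congrArg _ hy.symm
  · rintro ⟨c, rfl⟩
    ext i
    simp

end Coordinates

namespace RepQ1

section

variable {k}

lemma isSES_of_isShortExact {A C B : RepQ1 k} {f : Homo A C} {g : Homo C B}
    (h1 : f.f1.IsShortExact g.f1) (h2 : f.f2.IsShortExact g.f2) (h3 : f.f3.IsShortExact g.f3) :
    IsSES f g :=
  ⟨h1.1, h2.1, h3.1, h1.2.2, h2.2.2, h3.2.2, h1.2.1.linearMap_ker_eq.symm,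
    h2.2.1.linearMap_ker_eq.symm, h3.2.1.linearMap_ker_eq.symm⟩

end

instance : Subsingleton (E1 k 0).V2 := inferInstanceAs (Subsingleton (Fin 0 → k))

instance : Subsingleton (E1 k 0).V3 := inferInstanceAs (Subsingleton (Fin 0 → k))

instance : Subsingleton (E4 k 0).V3 := inferInstanceAs (Subsingleton (Fin 0 → k))

instance : Subsingleton (Mrep k).V1 := inferInstanceAs (Subsingleton (Fin 0 → k))

instance : Subsingleton (Mrep k).V3 := inferInstanceAs (Subsingleton (Fin 0 → k))

instance {ρ σ : RepQ1 k} [Subsingleton ρ.V2] [Subsingleton σ.V2] : Subsingleton (ρ.dsum σ).V2 :=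
  inferInstanceAs (Subsingleton (ρ.V2 × σ.V2))

instance {ρ σ : RepQ1 k} [Subsingleton ρ.V3] [Subsingleton σ.V3] : Subsingleton (ρ.dsum σ).V3 :=
  inferInstanceAs (Subsingleton (ρ.V3 × σ.V3))

lemma exists_isSES_E2_E1 (n : ℕ) :
    ∃ (f : Homo (E2 k n) (E1 k (n + 1))) (g : Homo (E1 k (n + 1)) ((E1 k 0).dsum (E1 k 0))),
      IsSES f g :=
  ⟨⟨midL k n ∘ₗ revL k n, revL k (n + 1), revL k (n + 1), revL_comp_jPlus n, revL_comp_jMinus n,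
      rfl⟩,
    ⟨endsL k n, 0, 0, Subsingleton.elim _ _, Subsingleton.elim _ _, Subsingleton.elim _ _⟩,
    isSES_of_isShortExact ((isShortExact_midL_endsL n).comp_bijective (revL_bijective n))
      (LinearMap.isShortExact_zero_right (revL_bijective _))
      (LinearMap.isShortExact_zero_right (revL_bijective _))⟩

lemma exists_isSES_E3_E2 (m : ℕ) :
    ∃ (f : Homo (E3 k m) (E2 k m)) (g : Homo (E2 k m) (Mrep k)), IsSES f g :=
  ⟨⟨LinearMap.id, jMinus k m, LinearMap.id, rfl, rfl, rfl⟩,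
    ⟨0, coordL k 0, 0, Subsingleton.elim _ _,
      (isShortExact_jMinus_coordL m).2.1.linearMap_comp_eq_zero.trans (LinearMap.zero_comp 0).symm,
      Subsingleton.elim _ _⟩,
    isSES_of_isShortExact (LinearMap.isShortExact_zero_right bijective_id)
      (isShortExact_jMinus_coordL m) (LinearMap.isShortExact_zero_right bijective_id)⟩

lemma exists_isSES_E3_E4 (n : ℕ) :
    ∃ (f : Homo (E3 k n) (E4 k (n + 1))) (g : Homo (E4 k (n + 1)) ((E4 k 0).dsum (E4 k 0))),
      IsSES f g :=
  ⟨⟨midL k n ∘ₗ revL k n, midL k n ∘ₗ revL k n, revL k (n + 1), revL_comp_jPlus n, rfl,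
      revL_comp_jMinus n⟩,
    ⟨endsL k n, endsL k n, 0, Subsingleton.elim _ _, rfl, Subsingleton.elim _ _⟩,
    isSES_of_isShortExact ((isShortExact_midL_endsL n).comp_bijective (revL_bijective n))
      ((isShortExact_midL_endsL n).comp_bijective (revL_bijective n))
      (LinearMap.isShortExact_zero_right (revL_bijective _))⟩

lemma exists_isSES_M_E4 (m : ℕ) :
    ∃ (f : Homo (Mrep k) (E4 k m)) (g : Homo (E4 k m) (E1 k m)), IsSES f g :=
  ⟨⟨0, singleL k m, 0, Subsingleton.elim _ _, Subsingleton.elim _ _,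
      (LinearMap.zero_comp 0).trans
        (isShortExact_singleL_piMinus m).2.1.linearMap_comp_eq_zero.symm⟩,
    ⟨LinearMap.id, piMinus k m, LinearMap.id, rfl, rfl, rfl⟩,
    isSES_of_isShortExact (LinearMap.isShortExact_zero_left bijective_id)
      (isShortExact_singleL_piMinus m) (LinearMap.isShortExact_zero_left bijective_id)⟩

end RepQ1

theorem statement_17_general (k : Type u) [Field k] :
    (∀ m : ℕ, 1 ≤ m →
      ∃ (f : RepQ1.Homo (E2 k (m - 1)) (E1 k m))
        (g : RepQ1.Homo (E1 k m) (RepQ1.dsum (E1 k 0) (E1 k 0))),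
        RepQ1.IsSES f g) ∧
    (∀ m : ℕ,
      ∃ (f : RepQ1.Homo (E3 k m) (E2 k m)) (g : RepQ1.Homo (E2 k m) (Mrep k)),
        RepQ1.IsSES f g) ∧
    (∀ m : ℕ, 1 ≤ m →
      ∃ (f : RepQ1.Homo (E3 k (m - 1)) (E4 k m))
        (g : RepQ1.Homo (E4 k m) (RepQ1.dsum (E4 k 0) (E4 k 0))),
        RepQ1.IsSES f g) ∧
    (∀ m : ℕ,
      ∃ (f : RepQ1.Homo (Mrep k) (E4 k m)) (g : RepQ1.Homo (E4 k m) (E1 k m)),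
        RepQ1.IsSES f g) := by
  refine ⟨fun m hm => ?_, RepQ1.exists_isSES_E3_E2 k, fun m hm => ?_, RepQ1.exists_isSES_M_E4 k⟩
  all_goals obtain ⟨n, rfl⟩ := Nat.exists_eq_add_of_le' hm
  · exact RepQ1.exists_isSES_E2_E1 k n
  · exact RepQ1.exists_isSES_E3_E4 k n

/-- The short exact sequences `0 → E₂^{m-1} → E₁^m → E₁⁰ ⊕ E₁⁰ → 0` (`m ≥ 1`),
`0 → E₃^m → E₂^m → M → 0`, `0 → E₃^{m-1} → E₄^m → E₄⁰ ⊕ E₄⁰ → 0` (`m ≥ 1`) and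
`0 → M → E₄^m → E₁^m → 0` in `Rep_k(Q1)`. -/
theorem statement_17 (k : Type u) [Field k] [IsAlgClosed k] :
    (∀ m : ℕ, 1 ≤ m →
      ∃ (f : RepQ1.Homo (E2 k (m - 1)) (E1 k m))
        (g : RepQ1.Homo (E1 k m) (RepQ1.dsum (E1 k 0) (E1 k 0))),
        RepQ1.IsSES f g) ∧
    (∀ m : ℕ,
      ∃ (f : RepQ1.Homo (E3 k m) (E2 k m)) (g : RepQ1.Homo (E2 k m) (Mrep k)),
        RepQ1.IsSES f g) ∧
    (∀ m : ℕ, 1 ≤ m →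
      ∃ (f : RepQ1.Homo (E3 k (m - 1)) (E4 k m))
        (g : RepQ1.Homo (E4 k m) (RepQ1.dsum (E4 k 0) (E4 k 0))),
        RepQ1.IsSES f g) ∧
    (∀ m : ℕ,
      ∃ (f : RepQ1.Homo (Mrep k) (E4 k m)) (g : RepQ1.Homo (E4 k m) (E1 k m)),
        RepQ1.IsSES f g) :=
  statement_17_general k
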